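/- arXiv:1702.00068 — 7 statements merged into one kernel-verified Lean document; each statement's English description precedes it below -/
import Mathlib

section
/- Let g ≥ 1, set n = 2g−1, and let T : M → M be the ℤ-linear 'Cremona pushforward' map for this n (so M has basis h, ε₁, …, ε_{2g}). Then T fixes the class g·h − (g−1)·∑_{i=1}^{2g} ε_i. (This is the computation showing that the standard Cremona transformation of ℙ^{2g−1} preserves the linear system L_{2g−1} of degree-g hypersurfaces with points of multiplicity g−1 at the fundamental points, hence induces an automorphism of the GIT quotient Σ_{2g−1}.) -/
/-!
By linearity, `T (a • h - b • ∑ εᵢ) = a • T h - b • ∑ T εᵢ`, and `∑ T εᵢ = 2g • h - (2g - 1) • ∑ εᵢ`.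
For `a = g`, `b = g - 1` the coefficient of `h` is `g (2g - 1) - (g - 1) 2g = g` and that of each
`εⱼ` is `-g (2g - 2) + (g - 1)(2g - 1) = -(g - 1)`.
-/

section CremonaLattice

variable {ι : Type*} [Fintype ι] [DecidableEq ι]

theorem sum_prod_zero_single_one :
    ∑ i : ι, ((0 : ℤ), Pi.single i (1 : ℤ)) = (0, 1) := by
  ext j
  · simp [Prod.fst_sum]
  · simp [Prod.snd_sum, Finset.sum_apply, Pi.single_apply]

theorem sum_prod_one_ite_zero_neg_one :
    ∑ i : ι, ((1 : ℤ), fun j : ι => if j = i then (0 : ℤ) else -1) =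
      ((Fintype.card ι : ℤ), fun _ => 1 - (Fintype.card ι : ℤ)) := by
  ext j
  · simp [Prod.fst_sum]
  · have hcard : 1 ≤ Fintype.card ι := Fintype.card_pos_iff.2 ⟨j⟩
    simp [Prod.snd_sum, Finset.sum_apply, Finset.sum_ite, Finset.filter_ne, Nat.cast_sub hcard]

end CremonaLattice

theorem cremona_fixes_segre_class_general (g : ℕ)
    (T : (ℤ × (Fin (2 * g) → ℤ)) →ₗ[ℤ] (ℤ × (Fin (2 * g) → ℤ)))
    (hh : T ((1 : ℤ), (0 : Fin (2 * g) → ℤ)) =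
      ((2 * (g : ℤ) - 1), fun _ => -((2 * (g : ℤ) - 1) - 1)))
    (he : ∀ i : Fin (2 * g), T ((0 : ℤ), Pi.single i (1 : ℤ)) =
      ((1 : ℤ), fun j => if j = i then 0 else -1)) :
    T ((g : ℤ) • ((1 : ℤ), (0 : Fin (2 * g) → ℤ)) -
        ((g : ℤ) - 1) • ∑ i, ((0 : ℤ), Pi.single i (1 : ℤ))) =
      (g : ℤ) • ((1 : ℤ), (0 : Fin (2 * g) → ℤ)) -
        ((g : ℤ) - 1) • ∑ i, ((0 : ℤ), Pi.single i (1 : ℤ)) := by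
  rw [map_sub, map_smul, map_smul, map_sum, hh]
  simp only [he]
  rw [sum_prod_one_ite_zero_neg_one, sum_prod_zero_single_one, Fintype.card_fin]
  ext j <;> simp <;> ring

/-- **The Cremona transformation of `ℙ^{2g-1}` preserves the linear system
`L_{2g-1}`.**  For `n = 2g - 1`, `M = ℤ × (Fin (2g) → ℤ)` models the free
`ℤ`-module with basis `h = (1, 0)` and `ε i = (0, Pi.single i 1)`
(`i = 1, …, 2g`).  If `T` is the `ℤ`-linear map determined by
`T h = n•h - (n-1)•∑ εᵢ` and `T (ε i) = h - ∑_{j ≠ i} ε j` (with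
`n = 2g - 1`), then `T` fixes the class `g•h - (g-1)•∑ εᵢ`. -/
theorem cremona_fixes_segre_class (g : ℕ) (hg : 1 ≤ g)
    (T : (ℤ × (Fin (2 * g) → ℤ)) →ₗ[ℤ] (ℤ × (Fin (2 * g) → ℤ)))
    (hh : T ((1 : ℤ), (0 : Fin (2 * g) → ℤ)) =
      ((2 * (g : ℤ) - 1), fun _ => -((2 * (g : ℤ) - 1) - 1)))
    (he : ∀ i : Fin (2 * g), T ((0 : ℤ), Pi.single i (1 : ℤ)) =
      ((1 : ℤ), fun j => if j = i then 0 else -1)) :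
    T ((g : ℤ) • ((1 : ℤ), (0 : Fin (2 * g) → ℤ)) -
        ((g : ℤ) - 1) • ∑ i, ((0 : ℤ), Pi.single i (1 : ℤ))) =
      (g : ℤ) • ((1 : ℤ), (0 : Fin (2 * g) → ℤ)) -
        ((g : ℤ) - 1) • ∑ i, ((0 : ℤ), Pi.single i (1 : ℤ)) :=
  cremona_fixes_segre_class_general g T hh he
end

section
/- Let g ≥ 1, set n = 2g, and let T : M → M be the ℤ-linear 'Cremona pushforward' map for this n (so M has basis h, ε₁, …, ε_{2g+1}). Then T fixes the class (2g+1)·h − (2g−1)·∑_{i=1}^{2g+1} ε_i. (This is the computation showing that the standard Cremona transformation of ℙ^{2g} preserves the linear system L_{2g} of degree-(2g+1) hypersurfaces with points of multiplicity 2g−1 at the fundamental points, hence induces an automorphism of the GIT quotient Σ_{2g}.) -/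
/-!
Write `h` for the hyperplane class and `E = ∑ εᵢ` for the sum of the `n + 1` exceptional classes.
Since `T εᵢ = h - E + εᵢ`, summing gives `T E = (n + 1) h - n E`; together with
`T h = n h - (n - 1) E`, linearity gives
`T ((n + 1) h - (n - 1) E) = (n + 1) h - (n - 1) E`.
-/

namespace Cremona

variable (R ι : Type*) [CommRing R] [Fintype ι] [DecidableEq ι]

def hyperplaneClass : R × (ι → R) := (1, 0)

def exceptionalClass (i : ι) : R × (ι → R) := (0, Pi.single i 1)

def exceptionalSum : R × (ι → R) := ∑ i, exceptionalClass R ι i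

variable {R ι}

theorem exceptionalSum_eq : exceptionalSum R ι = (0, fun _ => 1) := by
  ext j
  · simp [exceptionalSum, exceptionalClass, Prod.fst_sum]
  · simp [exceptionalSum, exceptionalClass, Prod.snd_sum, Finset.sum_apply, Pi.single_apply]

theorem smul_hyperplaneClass_sub_smul_exceptionalSum (a b : R) :
    a • hyperplaneClass R ι - b • exceptionalSum R ι = (a, fun _ => -b) := by
  ext <;> simp [hyperplaneClass, exceptionalSum_eq]

theorem hyperplaneClass_sub_exceptionalSum_add_exceptionalClass (i : ι) :
    hyperplaneClass R ι - exceptionalSum R ι + exceptionalClass R ι i =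
      (1, fun j => if j = i then 0 else -1) := by
  ext j
  · simp [hyperplaneClass, exceptionalClass, exceptionalSum_eq]
  · by_cases hji : j = i <;> simp [hyperplaneClass, exceptionalClass, exceptionalSum_eq, hji]

theorem map_exceptionalSum (T : (R × (ι → R)) →ₗ[R] (R × (ι → R)))
    (he : ∀ i, T (exceptionalClass R ι i) =
      hyperplaneClass R ι - exceptionalSum R ι + exceptionalClass R ι i) :
    T (exceptionalSum R ι) =
      (Fintype.card ι : R) • hyperplaneClass R ι -
        ((Fintype.card ι : R) - 1) • exceptionalSum R ι := by
  have hsum : ∑ i, T (exceptionalClass R ι i) =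
      (Fintype.card ι : R) • (hyperplaneClass R ι - exceptionalSum R ι) + exceptionalSum R ι := by
    simp only [he, Finset.sum_add_distrib, Finset.sum_const, Finset.card_univ, Nat.cast_smul_eq_nsmul]
    rfl
  rw [exceptionalSum, map_sum, hsum, ← exceptionalSum]
  module

theorem map_class_eq_self (T : (R × (ι → R)) →ₗ[R] (R × (ι → R))) (n : R)
    (hcard : (Fintype.card ι : R) = n + 1)
    (hh : T (hyperplaneClass R ι) = n • hyperplaneClass R ι - (n - 1) • exceptionalSum R ι)
    (he : ∀ i, T (exceptionalClass R ι i) =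
      hyperplaneClass R ι - exceptionalSum R ι + exceptionalClass R ι i) :
    T ((n + 1) • hyperplaneClass R ι - (n - 1) • exceptionalSum R ι) =
      (n + 1) • hyperplaneClass R ι - (n - 1) • exceptionalSum R ι := by
  rw [map_sub, map_smul, map_smul, hh, map_exceptionalSum T he, hcard]
  module

end Cremona

theorem cremona_fixes_even_class_general (g : ℕ)
    (T : (ℤ × (Fin (2 * g + 1) → ℤ)) →ₗ[ℤ] (ℤ × (Fin (2 * g + 1) → ℤ)))
    (hh : T ((1 : ℤ), (0 : Fin (2 * g + 1) → ℤ)) =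
      ((2 * (g : ℤ)), fun _ => -(2 * (g : ℤ) - 1)))
    (he : ∀ i : Fin (2 * g + 1), T ((0 : ℤ), Pi.single i (1 : ℤ)) =
      ((1 : ℤ), fun j => if j = i then 0 else -1)) :
    T ((2 * (g : ℤ) + 1) • ((1 : ℤ), (0 : Fin (2 * g + 1) → ℤ)) -
        (2 * (g : ℤ) - 1) • ∑ i, ((0 : ℤ), Pi.single i (1 : ℤ))) =
      (2 * (g : ℤ) + 1) • ((1 : ℤ), (0 : Fin (2 * g + 1) → ℤ)) -
        (2 * (g : ℤ) - 1) • ∑ i, ((0 : ℤ), Pi.single i (1 : ℤ)) := by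
  refine Cremona.map_class_eq_self T (2 * (g : ℤ)) (by simp) ?_ fun i => ?_
  · rw [Cremona.smul_hyperplaneClass_sub_smul_exceptionalSum]
    exact hh
  · rw [Cremona.hyperplaneClass_sub_exceptionalSum_add_exceptionalClass]
    exact he i

/-- **The Cremona transformation of `ℙ^{2g}` preserves the linear system
`L_{2g}`.**  For `n = 2g`, `M = ℤ × (Fin (2g+1) → ℤ)` models the free
`ℤ`-module with basis `h = (1, 0)` and `ε i = (0, Pi.single i 1)`
(`i = 1, …, 2g+1`).  If `T` is the `ℤ`-linear map determined by
`T h = n•h - (n-1)•∑ εᵢ` and `T (ε i) = h - ∑_{j ≠ i} ε j` (with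
`n = 2g`), then `T` fixes the class `(2g+1)•h - (2g-1)•∑ εᵢ`. -/
theorem cremona_fixes_even_class (g : ℕ) (hg : 1 ≤ g)
    (T : (ℤ × (Fin (2 * g + 1) → ℤ)) →ₗ[ℤ] (ℤ × (Fin (2 * g + 1) → ℤ)))
    (hh : T ((1 : ℤ), (0 : Fin (2 * g + 1) → ℤ)) =
      ((2 * (g : ℤ)), fun _ => -(2 * (g : ℤ) - 1)))
    (he : ∀ i : Fin (2 * g + 1), T ((0 : ℤ), Pi.single i (1 : ℤ)) =
      ((1 : ℤ), fun j => if j = i then 0 else -1)) :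
    T ((2 * (g : ℤ) + 1) • ((1 : ℤ), (0 : Fin (2 * g + 1) → ℤ)) -
        (2 * (g : ℤ) - 1) • ∑ i, ((0 : ℤ), Pi.single i (1 : ℤ))) =
      (2 * (g : ℤ) + 1) • ((1 : ℤ), (0 : Fin (2 * g + 1) → ℤ)) -
        (2 * (g : ℤ) - 1) • ∑ i, ((0 : ℤ), Pi.single i (1 : ℤ)) :=
  cremona_fixes_even_class_general g T hh he
end

section
/- Let g ≥ 2. In ℝ^{2g+2} = ℝ × ℝ^{2g+1}, with coordinates (a, b₁, …, b_{2g+1}), the ℝ-linear span of the finite set of vectors { (g−1, −𝟙_I) : I ⊆ {1, …, 2g+1}, |I| = g } (where 𝟙_I denotes the indicator vector of I) is exactly the hyperplane { (a, b) : g·a + (g−1)·∑_{i=1}^{2g+1} b_i = 0 }. (These vectors are the numerical classes (g−1)·l − e_{i₁} − … − e_{i_g} of the degree g−1 rational normal curves through g of the 2g+1 blown-up points, the curves contracted by the map from the blow-up of ℙ^{2g−1} to the GIT quotient Σ_{2g−1}; the statement is the key step in computing that Σ_{2g−1} has Picard rank 1.) -/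
/-!
Each class `(d, -𝟙_I)` with `|I| = k` lies on the hyperplane `k·a + d·∑ bᵢ = 0`. Conversely,
two classes whose index sets differ by exchanging `l` for `j` differ by `eⱼ - eₗ`, and these
differences span the zero-sum vectors `(0, b)`; subtracting a multiple of one fixed class from
a point of the hyperplane leaves such a vector, since `d ≠ 0`.
-/

open Finset

variable {K ι : Type*} [Field K]

section

variable [DecidableEq ι]

/-- The class `d·l - ∑_{i ∈ I} eᵢ`. -/
def curveClass (d : K) (I : Finset ι) : K × (ι → K) :=
  (d, fun i => if i ∈ I then -1 else 0)

def curveClasses (d : K) (k : ℕ) : Set (K × (ι → K)) :=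
  {v | ∃ I : Finset ι, I.card = k ∧ v = curveClass d I}

theorem curveClass_insert_sub_curveClass_insert (d : K) {t : Finset ι} {j l : ι}
    (hj : j ∉ t) (hl : l ∉ t) (hjl : j ≠ l) :
    curveClass d (insert l t) - curveClass d (insert j t) =
      LinearMap.inr K K (ι → K) (Pi.single j 1 - Pi.single l 1) := by
  ext i
  · simp [curveClass]
  · by_cases hij : i = j
    · subst hij
      simp [curveClass, hj, hjl]
    · by_cases hil : i = l
      · subst hil
        simp [curveClass, hl, hij]
      · simp [curveClass, hij, hil]

end

variable [Fintype ι]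

def classFunctional (k : ℕ) (d : K) : K × (ι → K) →ₗ[K] K where
  toFun x := k * x.1 + d * ∑ i, x.2 i
  map_add' x y := by
    simp only [Prod.fst_add, Prod.snd_add, Pi.add_apply, sum_add_distrib]
    ring
  map_smul' c x := by
    simp only [Prod.smul_fst, Prod.smul_snd, Pi.smul_apply, smul_eq_mul, ← mul_sum,
      RingHom.id_apply]
    ring

theorem classFunctional_apply (k : ℕ) (d : K) (x : K × (ι → K)) :
    classFunctional k d x = k * x.1 + d * ∑ i, x.2 i :=
  rfl

variable [DecidableEq ι]

theorem sum_curveClass_snd (d : K) (I : Finset ι) :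
    ∑ i, (curveClass d I).2 i = -(I.card : K) := by
  simp [curveClass, sum_ite_mem]

theorem span_curveClasses_le_ker (d : K) (k : ℕ) :
    Submodule.span K (curveClasses (ι := ι) d k) ≤ LinearMap.ker (classFunctional k d) := by
  rw [Submodule.span_le]
  rintro _ ⟨I, hI, rfl⟩
  rw [SetLike.mem_coe, LinearMap.mem_ker, classFunctional_apply, sum_curveClass_snd, hI]
  simp only [curveClass]
  ring

theorem inr_single_sub_single_mem_span_curveClasses {d : K} {k : ℕ} (hk₀ : 0 < k)
    (hk : k < Fintype.card ι) (j l : ι) :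
    LinearMap.inr K K (ι → K) (Pi.single j 1 - Pi.single l 1) ∈
      Submodule.span K (curveClasses d k) := by
  rcases eq_or_ne j l with rfl | hjl
  · rw [sub_self, map_zero]
    exact zero_mem _
  obtain ⟨t, ht, htc⟩ := exists_subset_card_eq (s := (univ.erase j).erase l) (n := k - 1)
    (by rw [card_erase_of_mem (by simpa using hjl.symm), card_erase_of_mem (mem_univ j),
      card_univ]; omega)
  have hj : j ∉ t := fun h => by simpa using ht h
  have hl : l ∉ t := fun h => by simpa using ht h
  have mem_of_insert {m : ι} (hm : m ∉ t) :
      curveClass d (insert m t) ∈ Submodule.span K (curveClasses d k) :=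
    Submodule.subset_span ⟨insert m t, by rw [card_insert_of_notMem hm]; omega, rfl⟩
  rw [← curveClass_insert_sub_curveClass_insert d hj hl hjl]
  exact Submodule.sub_mem _ (mem_of_insert hl) (mem_of_insert hj)

theorem mem_of_sum_eq_zero_of_single_sub_single_mem {p : Submodule K (ι → K)}
    (hp : ∀ j l, Pi.single j 1 - Pi.single l 1 ∈ p) {b : ι → K} (hb : ∑ i, b i = 0)
    (l : ι) :
    b ∈ p := by
  have hdecomp : b = ∑ j, b j • (Pi.single j 1 - Pi.single l 1 : ι → K) := by
    simp only [smul_sub, sum_sub_distrib, ← sum_smul, hb, zero_smul, sub_zero]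
    ext i
    simp [Pi.single_apply]
  rw [hdecomp]
  exact Submodule.sum_mem _ fun j _ => Submodule.smul_mem _ _ (hp j l)

theorem span_curveClasses_eq_ker {d : K} (hd : d ≠ 0) {k : ℕ} (hk₀ : 0 < k)
    (hk : k < Fintype.card ι) :
    Submodule.span K (curveClasses (ι := ι) d k) = LinearMap.ker (classFunctional k d) := by
  refine le_antisymm (span_curveClasses_le_ker d k) fun x hx => ?_
  rw [LinearMap.mem_ker, classFunctional_apply] at hx
  obtain ⟨I, -, hI⟩ := exists_subset_card_eq (s := (univ : Finset ι)) (n := k)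
    (by rw [card_univ]; omega)
  set c := x.1 / d
  have hsplit :
      x = c • curveClass d I + LinearMap.inr K K (ι → K) (x.2 - c • (curveClass d I).2) := by
    ext i
    · simp [c, curveClass, hd]
    · simp
  have hsum : ∑ i, (x.2 - c • (curveClass d I).2) i = 0 := by
    simp only [Pi.sub_apply, Pi.smul_apply, smul_eq_mul, sum_sub_distrib, ← mul_sum,
      sum_curveClass_snd, hI, c]
    field_simp
    linear_combination hx
  obtain ⟨l⟩ : Nonempty ι := Fintype.card_pos_iff.mp (by omega)
  rw [hsplit]
  refine Submodule.add_mem _ (Submodule.smul_mem _ _ (Submodule.subset_span ⟨I, hI, rfl⟩)) ?_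
  exact mem_of_sum_eq_zero_of_single_sub_single_mem
    (p := (Submodule.span K (curveClasses d k)).comap (LinearMap.inr K K _))
    (inr_single_sub_single_mem_span_curveClasses hk₀ hk) hsum l

/-- **The span of the classes of contracted rational normal curves.**
Identify `N₁` of the blow-up of `ℙ^{2g-1}` at `2g+1` general points with
`ℝ × (Fin (2g+1) → ℝ)`, where `(a, b)` represents `a·l + ∑ bᵢ·eᵢ`.
For `g ≥ 2`, the `ℝ`-linear span of the classes
`(g-1, -𝟙_I)` for `I ⊆ {1, …, 2g+1}` with `|I| = g` (the classes
`(g-1)·l - e_{i₁} - … - e_{i_g}` of the contracted degree `g-1` rational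
normal curves) is exactly the hyperplane
`{(a, b) | g·a + (g-1)·∑ bᵢ = 0}`. -/
theorem span_contracted_curve_classes (g : ℕ) (hg : 2 ≤ g) :
    (Submodule.span ℝ
        {v : ℝ × (Fin (2 * g + 1) → ℝ) |
          ∃ I : Finset (Fin (2 * g + 1)), I.card = g ∧
            v = ((g : ℝ) - 1, fun i => if i ∈ I then -1 else 0)} :
      Set (ℝ × (Fin (2 * g + 1) → ℝ))) =
      {x : ℝ × (Fin (2 * g + 1) → ℝ) |
        (g : ℝ) * x.1 + ((g : ℝ) - 1) * ∑ i, x.2 i = 0} := by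
  have hd : (g : ℝ) - 1 ≠ 0 := by
    rw [sub_ne_zero]
    exact_mod_cast (by omega : g ≠ 1)
  exact congrArg SetLike.coe
    (span_curveClasses_eq_ker hd (by omega) (by rw [Fintype.card_fin]; omega))
end

section
/- Let g ≥ 1. Every element of V spans an extremal ray of the convex cone C generated by V in ℝ^{2g+3}; that is, for every v ∈ V, if v = u + w with u, w ∈ C, then u and w are nonnegative multiples of v. (These vectors are the classes of the 1-dimensional boundary strata L_I and L_{I^c} of the GIT quotient Σ_{2g} = (ℙ¹)^{2g+3} // PGL(2), and the statement is that each such class generates an extremal ray of the Mori cone NE(Σ_{2g}).) -/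
/-- The classes of the 1-dimensional boundary strata `L_I` and `L_{I^c}` of
the GIT quotient `Σ_{2g} = (ℙ¹)^{2g+3} // PGL(2)`, written in
`ℝ × (Fin (2g+2) → ℝ)` where `(a, b)` represents `a·l + ∑ bᵢ·eᵢ`:
the vectors `(g, -𝟙_I)` for `|I| = g+1` and `(1-g, 𝟙_J)` for `|J| = g`. -/
def boundaryClasses (g : ℕ) : Set (ℝ × (Fin (2 * g + 2) → ℝ)) :=
  {v | (∃ I : Finset (Fin (2 * g + 2)), I.card = g + 1 ∧
          v = ((g : ℝ), fun i => if i ∈ I then -1 else 0)) ∨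
       (∃ J : Finset (Fin (2 * g + 2)), J.card = g ∧
          v = (1 - (g : ℝ), fun i => if i ∈ J then 1 else 0))}

/-- The convex cone generated by `V`: all finite nonnegative real linear
combinations of elements of `V` (the Mori cone `NE(Σ_{2g})`). -/
def moriCone (g : ℕ) : Set (ℝ × (Fin (2 * g + 2) → ℝ)) :=
  {x | ∃ (m : ℕ) (c : Fin m → ℝ) (f : Fin m → ℝ × (Fin (2 * g + 2) → ℝ)),
    (∀ i, 0 ≤ c i) ∧ (∀ i, f i ∈ boundaryClasses g) ∧ x = ∑ i, c i • f i}

/-!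
Each `v ∈ V` is exposed by a linear functional `φ`: `φ ≥ 0` on `V` and `φ` vanishes on `V`
only at `v`. Then `φ ≥ 0` on the cone, so `v = u + w` forces `φ u = φ w = 0`, and a nonnegative
combination of generators killed by `φ` only uses the generator `v`.

The functionals are built from `δ(a, b) = (g + 1) a + g ∑ bᵢ` and `η(a, b) = g a + (g - 1) ∑ bᵢ`,
which take the values `0, 1` resp. `1, 0` on the classes `(g, -𝟙_I)`, `(1 - g, 𝟙_J)`.
For `v = (g, -𝟙_{I₀})` take `(g + 1) δ - ∑_{i ∉ I₀} bᵢ`, with values `#(I \ I₀)` and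
`g + 1 - #(J \ I₀)`; for `v = (1 - g, 𝟙_{J₀})` take `(g + 2) η + ∑_{i ∉ J₀} bᵢ`, with values
`g + 2 - #(I \ J₀)` and `#(J \ J₀)`.
-/

open Finset

section Exposing

variable {M : Type*} [AddCommGroup M] [Module ℝ M] {ι : Type*} [Fintype ι]

def Exposes (S : Set M) (φ : M →ₗ[ℝ] ℝ) (v : M) : Prop :=
  φ v = 0 ∧ ∀ b ∈ S, 0 ≤ φ b ∧ (φ b = 0 → b = v)

theorem exists_sum_smul_eq_smul_of_apply_eq_zero (φ : M →ₗ[ℝ] ℝ) {v : M} {c : ι → ℝ}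
    {f : ι → M} (hc : ∀ i, 0 ≤ c i) (hf : ∀ i, 0 ≤ φ (f i)) (hker : ∀ i, φ (f i) = 0 → f i = v)
    (h : φ (∑ i, c i • f i) = 0) : ∃ s : ℝ, 0 ≤ s ∧ ∑ i, c i • f i = s • v := by
  classical
  simp only [map_sum, map_smul, smul_eq_mul] at h
  have hterm := (sum_eq_zero_iff_of_nonneg fun i _ => mul_nonneg (hc i) (hf i)).mp h
  refine ⟨∑ i, if f i = v then c i else 0,
    sum_nonneg fun i _ => by split_ifs <;> simp [hc i], ?_⟩
  rw [sum_smul]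
  refine sum_congr rfl fun i _ => ?_
  split_ifs with hfi
  · rw [hfi]
  · obtain hci | hφi := mul_eq_zero.mp (hterm i (mem_univ i))
    · simp [hci]
    · exact absurd (hker i hφi) hfi

end Exposing

section Cone

variable {g : ℕ} {φ : (ℝ × (Fin (2 * g + 2) → ℝ)) →ₗ[ℝ] ℝ} {v x : ℝ × (Fin (2 * g + 2) → ℝ)}

theorem Exposes.apply_nonneg_of_mem_moriCone (hφ : Exposes (boundaryClasses g) φ v)
    (hx : x ∈ moriCone g) : 0 ≤ φ x := by
  obtain ⟨m, c, f, hc, hf, rfl⟩ := hx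
  simp only [map_sum, map_smul, smul_eq_mul]
  exact sum_nonneg fun i _ => mul_nonneg (hc i) (hφ.2 _ (hf i)).1

theorem Exposes.exists_eq_smul_of_mem_moriCone (hφ : Exposes (boundaryClasses g) φ v)
    (hx : x ∈ moriCone g) (h : φ x = 0) : ∃ s : ℝ, 0 ≤ s ∧ x = s • v := by
  obtain ⟨m, c, f, hc, hf, rfl⟩ := hx
  exact exists_sum_smul_eq_smul_of_apply_eq_zero φ hc (fun i => (hφ.2 _ (hf i)).1)
    (fun i => (hφ.2 _ (hf i)).2) h

theorem Exposes.extremal_moriCone (hφ : Exposes (boundaryClasses g) φ v)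
    {u w : ℝ × (Fin (2 * g + 2) → ℝ)} (hu : u ∈ moriCone g) (hw : w ∈ moriCone g)
    (huw : v = u + w) :
    (∃ s : ℝ, 0 ≤ s ∧ u = s • v) ∧ (∃ t : ℝ, 0 ≤ t ∧ w = t • v) := by
  have hu₀ := hφ.apply_nonneg_of_mem_moriCone hu
  have hw₀ := hφ.apply_nonneg_of_mem_moriCone hw
  have hsum : φ u + φ w = 0 := by rw [← map_add, ← huw, hφ.1]
  exact ⟨hφ.exists_eq_smul_of_mem_moriCone hu (by linarith),
    hφ.exists_eq_smul_of_mem_moriCone hw (by linarith)⟩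

end Cone

noncomputable def exposingFunctional (n : ℕ) (p q r : ℝ) (T : Finset (Fin n)) :
    (ℝ × (Fin n → ℝ)) →ₗ[ℝ] ℝ :=
  p • LinearMap.fst ℝ ℝ _ +
    (q • ∑ i, LinearMap.proj i + r • ∑ i ∈ Tᶜ, LinearMap.proj i) ∘ₗ LinearMap.snd ℝ ℝ _

theorem exposingFunctional_apply_indicator {n : ℕ} (p q r : ℝ) (T I : Finset (Fin n))
    (a x : ℝ) :
    exposingFunctional n p q r T (a, fun i => if i ∈ I then x else 0) =
      p * a + (q * #I + r * #(I \ T)) * x := by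
  simp only [exposingFunctional, LinearMap.add_apply, LinearMap.smul_apply, LinearMap.fst_apply,
    smul_eq_mul, LinearMap.coe_comp, LinearMap.coe_snd, Function.comp_apply, LinearMap.sum_apply,
    LinearMap.coe_proj, Function.eval, sum_ite_mem, inter_comm, inter_univ, sum_const, nsmul_eq_mul,
    sdiff_eq_inter_compl]
  ring

theorem eq_of_card_sdiff_eq_zero {α : Type*} [DecidableEq α] {I T : Finset α}
    (hcard : #T ≤ #I) (h : #(I \ T) = 0) : I = T := by
  rw [card_eq_zero, sdiff_eq_empty_iff_subset] at h
  exact eq_of_subset_of_card_le h hcard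

theorem exposes_negIndicator {g : ℕ} {I₀ : Finset (Fin (2 * g + 2))} (hI₀ : #I₀ = g + 1) :
    Exposes (boundaryClasses g)
      (exposingFunctional _ (((g : ℝ) + 1) ^ 2) (g * (g + 1)) (-1) I₀)
      ((g : ℝ), fun i => if i ∈ I₀ then -1 else 0) := by
  have value_neg (I : Finset (Fin (2 * g + 2))) (hI : #I = g + 1) :
      exposingFunctional _ (((g : ℝ) + 1) ^ 2) (g * (g + 1)) (-1) I₀
        ((g : ℝ), fun i => if i ∈ I then -1 else 0) = #(I \ I₀) := by
    rw [exposingFunctional_apply_indicator, hI]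
    push_cast
    ring
  have value_pos (J : Finset (Fin (2 * g + 2))) (hJ : #J = g) :
      exposingFunctional _ (((g : ℝ) + 1) ^ 2) (g * (g + 1)) (-1) I₀
        (1 - (g : ℝ), fun i => if i ∈ J then 1 else 0) = g + 1 - #(J \ I₀) := by
    rw [exposingFunctional_apply_indicator, hJ]
    ring
  refine ⟨by simp [value_neg I₀ hI₀], ?_⟩
  rintro b (⟨I, hI, rfl⟩ | ⟨J, hJ, rfl⟩)
  · rw [value_neg I hI]
    refine ⟨by positivity, fun h => ?_⟩
    obtain rfl : I = I₀ := eq_of_card_sdiff_eq_zero (by omega) (by exact_mod_cast h)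
    rfl
  · have : (#(J \ I₀) : ℝ) ≤ g := by exact_mod_cast hJ ▸ card_le_card sdiff_subset
    rw [value_pos J hJ]
    exact ⟨by linarith, fun h => by linarith⟩

theorem exposes_indicator {g : ℕ} {J₀ : Finset (Fin (2 * g + 2))} (hJ₀ : #J₀ = g) :
    Exposes (boundaryClasses g)
      (exposingFunctional _ (g * (g + 2)) ((g - 1) * (g + 2)) 1 J₀)
      (1 - (g : ℝ), fun i => if i ∈ J₀ then 1 else 0) := by
  have value_neg (I : Finset (Fin (2 * g + 2))) (hI : #I = g + 1) :
      exposingFunctional _ (g * (g + 2)) ((g - 1) * (g + 2)) 1 J₀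
        ((g : ℝ), fun i => if i ∈ I then -1 else 0) = g + 2 - #(I \ J₀) := by
    rw [exposingFunctional_apply_indicator, hI]
    push_cast
    ring
  have value_pos (J : Finset (Fin (2 * g + 2))) (hJ : #J = g) :
      exposingFunctional _ (g * (g + 2)) ((g - 1) * (g + 2)) 1 J₀
        (1 - (g : ℝ), fun i => if i ∈ J then 1 else 0) = #(J \ J₀) := by
    rw [exposingFunctional_apply_indicator, hJ]
    ring
  refine ⟨by simp [value_pos J₀ hJ₀], ?_⟩
  rintro b (⟨I, hI, rfl⟩ | ⟨J, hJ, rfl⟩)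
  · have : (#(I \ J₀) : ℝ) ≤ g + 1 := by exact_mod_cast hI ▸ card_le_card sdiff_subset
    rw [value_neg I hI]
    exact ⟨by linarith, fun h => by linarith⟩
  · rw [value_pos J hJ]
    refine ⟨by positivity, fun h => ?_⟩
    obtain rfl : J = J₀ := eq_of_card_sdiff_eq_zero (by omega) (by exact_mod_cast h)
    rfl

theorem boundaryClasses_extremal_general (g : ℕ)
    (v : ℝ × (Fin (2 * g + 2) → ℝ)) (hv : v ∈ boundaryClasses g)
    (u w : ℝ × (Fin (2 * g + 2) → ℝ)) (hu : u ∈ moriCone g)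
    (hw : w ∈ moriCone g) (huw : v = u + w) :
    (∃ s : ℝ, 0 ≤ s ∧ u = s • v) ∧ (∃ t : ℝ, 0 ≤ t ∧ w = t • v) := by
  rcases hv with ⟨I₀, hI₀, rfl⟩ | ⟨J₀, hJ₀, rfl⟩
  · exact (exposes_negIndicator hI₀).extremal_moriCone hu hw huw
  · exact (exposes_indicator hJ₀).extremal_moriCone hu hw huw

/-- **Each boundary class spans an extremal ray of the Mori cone.**
For `g ≥ 1`, every `v ∈ V` spans an extremal ray of the convex cone `C`
generated by `V`: if `v = u + w` with `u, w ∈ C`, then `u` and `w` are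
nonnegative multiples of `v`. -/
theorem boundaryClasses_extremal (g : ℕ) (hg : 1 ≤ g)
    (v : ℝ × (Fin (2 * g + 2) → ℝ)) (hv : v ∈ boundaryClasses g)
    (u w : ℝ × (Fin (2 * g + 2) → ℝ)) (hu : u ∈ moriCone g)
    (hw : w ∈ moriCone g) (huw : v = u + w) :
    (∃ s : ℝ, 0 ≤ s ∧ u = s • v) ∧ (∃ t : ℝ, 0 ≤ t ∧ w = t • v) :=
  boundaryClasses_extremal_general g v hv u w hu hw huw
end

section
/- Let g ≥ 1. The convex cone C generated by V in ℝ^{2g+3} has exactly binom(2g+3, g+1) extremal rays, namely the rays ℝ_{≥0}·v for v ∈ V, and these rays are pairwise distinct. (This is the statement that the Mori cone NE(Σ_{2g}) of the GIT quotient Σ_{2g} = (ℙ¹)^{2g+3} // PGL(2) with the symmetric polarization has exactly binom(2g+2,g) + binom(2g+2,g+1) = binom(2g+3,g+1) extremal rays, each generated by the class of a 1-dimensional boundary stratum.) -/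
/-- The ray `ℝ_{≥0}·v` spanned by a vector `v`. -/
def rayOf {g : ℕ} (v : ℝ × (Fin (2 * g + 2) → ℝ)) :
    Set (ℝ × (Fin (2 * g + 2) → ℝ)) :=
  {x | ∃ t : ℝ, 0 ≤ t ∧ x = t • v}

/-- A ray `ℝ_{≥0}·v` (`v ∈ C`, `v ≠ 0`) is extremal if whenever `v = u + w`
with `u, w ∈ C`, both `u` and `w` are nonnegative multiples of `v`. -/
def IsExtremalRay (g : ℕ) (R : Set (ℝ × (Fin (2 * g + 2) → ℝ))) : Prop :=
  ∃ v, v ≠ 0 ∧ v ∈ moriCone g ∧ R = rayOf v ∧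
    ∀ u w, u ∈ moriCone g → w ∈ moriCone g → v = u + w →
      (∃ s : ℝ, 0 ≤ s ∧ u = s • v) ∧ (∃ t : ℝ, 0 ≤ t ∧ w = t • v)

open Finset

section ConicHull

variable {E : Type*} [AddCommGroup E] [Module ℝ E]

def conicHull (V : Set E) : Set E :=
  {x | ∃ (m : ℕ) (c : Fin m → ℝ) (f : Fin m → E),
    (∀ i, 0 ≤ c i) ∧ (∀ i, f i ∈ V) ∧ x = ∑ i, c i • f i}

def IsExposingFunctional (V : Set E) (L : E →ₗ[ℝ] ℝ) (v : E) : Prop :=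
  (∀ x ∈ V, 0 ≤ L x) ∧ ∀ x ∈ V, L x = 0 ↔ x = v

variable {V : Set E} {L : E →ₗ[ℝ] ℝ} {v : E}

lemma smul_mem_conicHull {x : E} (hx : x ∈ V) {c : ℝ} (hc : 0 ≤ c) : c • x ∈ conicHull V :=
  ⟨1, fun _ => c, fun _ => x, fun _ => hc, fun _ => hx, by simp⟩

lemma subset_conicHull : V ⊆ conicHull V := fun x hx => by
  simpa using smul_mem_conicHull hx zero_le_one

lemma map_nonneg_of_mem_conicHull (hL : ∀ x ∈ V, 0 ≤ L x) {u : E} (hu : u ∈ conicHull V) :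
    0 ≤ L u := by
  obtain ⟨m, c, f, hc, hf, rfl⟩ := hu
  simp only [map_sum, map_smul, smul_eq_mul]
  exact sum_nonneg fun i _ => mul_nonneg (hc i) (hL _ (hf i))

lemma IsExposingFunctional.exists_eq_smul_of_map_eq_zero (hL : IsExposingFunctional V L v)
    {u : E} (hu : u ∈ conicHull V) (hLu : L u = 0) : ∃ s : ℝ, 0 ≤ s ∧ u = s • v := by
  obtain ⟨m, c, f, hc, hf, rfl⟩ := hu
  simp only [map_sum, map_smul, smul_eq_mul] at hLu
  have hterm := (sum_eq_zero_iff_of_nonneg fun i _ => mul_nonneg (hc i) (hL.1 _ (hf i))).1 hLu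
  refine ⟨∑ i, c i, sum_nonneg fun i _ => hc i, ?_⟩
  rw [sum_smul]
  refine sum_congr rfl fun i hi => ?_
  rcases mul_eq_zero.1 (hterm i hi) with h | h
  · simp [h]
  · rw [(hL.2 _ (hf i)).1 h]

lemma IsExposingFunctional.eq_smul_of_add_eq (hL : IsExposingFunctional V L v) (hv : v ∈ V)
    {u w : E} (hu : u ∈ conicHull V) (hw : w ∈ conicHull V) (huw : v = u + w) :
    (∃ s : ℝ, 0 ≤ s ∧ u = s • v) ∧ (∃ t : ℝ, 0 ≤ t ∧ w = t • v) := by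
  have hsum : L u + L w = 0 := by rw [← map_add, ← huw, (hL.2 v hv).2 rfl]
  have hLu := map_nonneg_of_mem_conicHull hL.1 hu
  have hLw := map_nonneg_of_mem_conicHull hL.1 hw
  exact ⟨hL.exists_eq_smul_of_map_eq_zero hu (by linarith),
    hL.exists_eq_smul_of_map_eq_zero hw (by linarith)⟩

lemma IsExposingFunctional.eq_of_eq_smul (hL : IsExposingFunctional V L v) (hv : v ∈ V)
    {w : E} (hw : w ∈ V) {t : ℝ} (hwt : w = t • v) : w = v :=
  (hL.2 w hw).1 (by rw [hwt, map_smul, (hL.2 v hv).2 rfl, smul_zero])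

/-- Split `v = ∑ cᵢ fᵢ` as `cᵢ fᵢ + (v - cᵢ fᵢ)` at a nonzero term. -/
lemma exists_mem_eq_pos_smul_of_forall_add_eq (hv : v ∈ conicHull V) (hv0 : v ≠ 0)
    (hsplit : ∀ u w, u ∈ conicHull V → w ∈ conicHull V → v = u + w →
      ∃ s : ℝ, 0 ≤ s ∧ u = s • v) :
    ∃ x ∈ V, ∃ t : ℝ, 0 < t ∧ v = t • x := by
  obtain ⟨m, c, f, hc, hf, rfl⟩ := hv
  obtain ⟨i₀, hi₀⟩ : ∃ i, c i • f i ≠ 0 := by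
    by_contra! h
    exact hv0 (sum_eq_zero fun i _ => h i)
  have hrest : ∑ i, c i • f i - c i₀ • f i₀ ∈ conicHull V := by
    refine ⟨m, Function.update c i₀ 0, f, fun i => ?_, hf, ?_⟩
    · rcases eq_or_ne i i₀ with rfl | h
      · simp
      · simpa [h] using hc i
    · rw [Fintype.sum_eq_add_sum_compl i₀, Fintype.sum_eq_add_sum_compl i₀ (fun i => _ • f i)]
      simp only [Function.update_self, zero_smul, zero_add, add_sub_cancel_left]
      exact sum_congr rfl fun i hi => by
        rw [Function.update_of_ne (by simpa using hi)]
  obtain ⟨s, hs, hsv⟩ := hsplit _ _ (smul_mem_conicHull (hf i₀) (hc i₀)) hrest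
    (add_sub_cancel _ _).symm
  have hs0 : s ≠ 0 := by rintro rfl; exact hi₀ (by simpa using hsv)
  have hc0 : c i₀ ≠ 0 := by rintro h; exact hi₀ (by simp [h])
  refine ⟨f i₀, hf i₀, s⁻¹ * c i₀, mul_pos (inv_pos.2 (hs.lt_of_ne' hs0))
    ((hc i₀).lt_of_ne' hc0), ?_⟩
  rw [mul_smul, hsv, smul_smul, inv_mul_cancel₀ hs0, one_smul]

end ConicHull

section TestFunctional

variable {ι : Type*} [DecidableEq ι]

lemma ite_mem_injective {c : ℝ} (hc : c ≠ 0) :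
    Function.Injective fun (S : Finset ι) (i : ι) => if i ∈ S then c else 0 := by
  intro S T h
  ext i
  have hi := congrFun h i
  by_cases hS : i ∈ S <;> by_cases hT : i ∈ T <;> simp_all

lemma eq_of_card_sdiff_eq_zero_s10 {s t : Finset ι} (h : #(s \ t) = 0) (hst : #s = #t) : s = t :=
  eq_of_subset_of_card_le (sdiff_eq_empty_iff_subset.1 (card_eq_zero.1 h)) hst.ge

variable [Fintype ι]

def testFunctional (p q r : ℝ) (S : Finset ι) : ℝ × (ι → ℝ) →ₗ[ℝ] ℝ :=
  p • LinearMap.fst ℝ ℝ (ι → ℝ) +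
    (q • ∑ i, LinearMap.proj i + r • ∑ i ∈ Sᶜ, LinearMap.proj i) ∘ₗ LinearMap.snd ℝ ℝ (ι → ℝ)

lemma testFunctional_apply (p q r a c : ℝ) (S T : Finset ι) :
    testFunctional p q r S (a, fun i => if i ∈ T then c else 0) =
      p * a + c * (q * #T + r * #(T \ S)) := by
  simp only [testFunctional, LinearMap.add_apply, LinearMap.smul_apply, LinearMap.fst_apply,
    smul_eq_mul, LinearMap.coe_comp, LinearMap.coe_snd, Function.comp_apply, LinearMap.coe_sum,
    LinearMap.coe_proj, Finset.sum_apply, Function.eval, sum_ite_mem, inter_comm, inter_univ,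
    sum_const, nsmul_eq_mul, sdiff_eq_inter_compl]
  ring

end TestFunctional

section BoundaryClasses

variable {g : ℕ}

lemma isExposingFunctional_of_card_eq_succ {I : Finset (Fin (2 * g + 2))} (hI : #I = g + 1) :
    IsExposingFunctional (boundaryClasses g)
      (testFunctional (((g : ℝ) + 1) ^ 2) (g * (g + 1)) (-1) I)
      ((g : ℝ), fun i => if i ∈ I then -1 else 0) := by
  set L := testFunctional (((g : ℝ) + 1) ^ 2) (g * (g + 1)) (-1) I
  have hA : ∀ I' : Finset (Fin (2 * g + 2)), #I' = g + 1 →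
      L ((g : ℝ), fun i => if i ∈ I' then -1 else 0) = #(I' \ I) := by
    intro I' hI'
    rw [testFunctional_apply, hI']
    push_cast
    ring
  have hB : ∀ J : Finset (Fin (2 * g + 2)), #J = g →
      0 < L (1 - (g : ℝ), fun i => if i ∈ J then 1 else 0) := by
    intro J hJ
    have hJI : (#(J \ I) : ℝ) ≤ g := mod_cast (card_le_card sdiff_subset).trans hJ.le
    rw [testFunctional_apply, hJ]
    nlinarith
  refine ⟨?_, ?_⟩
  · rintro x (⟨I', hI', rfl⟩ | ⟨J, hJ, rfl⟩)
    · rw [hA I' hI']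
      positivity
    · exact (hB J hJ).le
  · rintro x (⟨I', hI', rfl⟩ | ⟨J, hJ, rfl⟩)
    · rw [hA I' hI', Nat.cast_eq_zero, Prod.mk_right_inj,
        (ite_mem_injective (by norm_num)).eq_iff]
      exact ⟨fun h => eq_of_card_sdiff_eq_zero_s10 h (hI'.trans hI.symm), fun h => by simp [h]⟩
    · refine iff_of_false (hB J hJ).ne' fun h => (hB J hJ).ne' ?_
      simp [h, hA I hI]

lemma isExposingFunctional_of_card_eq {J : Finset (Fin (2 * g + 2))} (hJ : #J = g) :
    IsExposingFunctional (boundaryClasses g)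
      (testFunctional ((g : ℝ) * (g + 2)) ((g - 1) * (g + 2)) 1 J)
      (1 - (g : ℝ), fun i => if i ∈ J then 1 else 0) := by
  set L := testFunctional ((g : ℝ) * (g + 2)) ((g - 1) * (g + 2)) 1 J
  have hB : ∀ J' : Finset (Fin (2 * g + 2)), #J' = g →
      L (1 - (g : ℝ), fun i => if i ∈ J' then 1 else 0) = #(J' \ J) := by
    intro J' hJ'
    rw [testFunctional_apply, hJ']
    ring
  have hA : ∀ I : Finset (Fin (2 * g + 2)), #I = g + 1 →
      0 < L ((g : ℝ), fun i => if i ∈ I then -1 else 0) := by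
    intro I hI
    have hIJ : (#(I \ J) : ℝ) ≤ g + 1 := mod_cast (card_le_card sdiff_subset).trans hI.le
    rw [testFunctional_apply, hI]
    push_cast
    nlinarith
  refine ⟨?_, ?_⟩
  · rintro x (⟨I, hI, rfl⟩ | ⟨J', hJ', rfl⟩)
    · exact (hA I hI).le
    · rw [hB J' hJ']
      positivity
  · rintro x (⟨I, hI, rfl⟩ | ⟨J', hJ', rfl⟩)
    · refine iff_of_false (hA I hI).ne' fun h => (hA I hI).ne' ?_
      simp [h, hB J hJ]
    · rw [hB J' hJ', Nat.cast_eq_zero, Prod.mk_right_inj,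
        (ite_mem_injective one_ne_zero).eq_iff]
      exact ⟨fun h => eq_of_card_sdiff_eq_zero_s10 h (hJ'.trans hJ.symm), fun h => by simp [h]⟩

lemma exists_isExposingFunctional {v : ℝ × (Fin (2 * g + 2) → ℝ)} (hv : v ∈ boundaryClasses g) :
    ∃ L, IsExposingFunctional (boundaryClasses g) L v := by
  rcases hv with ⟨I, hI, rfl⟩ | ⟨J, hJ, rfl⟩
  exacts [⟨_, isExposingFunctional_of_card_eq_succ hI⟩, ⟨_, isExposingFunctional_of_card_eq hJ⟩]

end BoundaryClasses

section Rays

variable {g : ℕ}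

lemma rayOf_smul_of_pos {v : ℝ × (Fin (2 * g + 2) → ℝ)} {t : ℝ} (ht : 0 < t) :
    rayOf (t • v) = rayOf v := by
  ext x
  constructor
  · rintro ⟨r, hr, rfl⟩
    exact ⟨r * t, by positivity, by rw [smul_smul]⟩
  · rintro ⟨r, hr, rfl⟩
    exact ⟨r / t, by positivity, by rw [smul_smul, div_mul_cancel₀ _ ht.ne']⟩

lemma ne_zero_of_mem_boundaryClasses {v : ℝ × (Fin (2 * g + 2) → ℝ)}
    (hv : v ∈ boundaryClasses g) : v ≠ 0 := by
  rcases hv with ⟨I, hI, rfl⟩ | ⟨J, hJ, rfl⟩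
  · obtain ⟨i, hi⟩ := card_pos.1 (by omega : 0 < #I)
    exact fun h => (by simpa using congrFun (congrArg Prod.snd h) i : i ∉ I) hi
  · rcases J.eq_empty_or_nonempty with rfl | ⟨j, hj⟩
    · rw [card_empty] at hJ
      subst hJ
      simp
    · exact fun h => (by simpa using congrFun (congrArg Prod.snd h) j : j ∉ J) hj

lemma isExtremalRay_rayOf {v : ℝ × (Fin (2 * g + 2) → ℝ)} (hv : v ∈ boundaryClasses g) :
    IsExtremalRay g (rayOf v) := by
  obtain ⟨L, hL⟩ := exists_isExposingFunctional hv
  exact ⟨v, ne_zero_of_mem_boundaryClasses hv, subset_conicHull hv, rfl,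
    fun u w hu hw => hL.eq_smul_of_add_eq hv hu hw⟩

lemma mem_image_rayOf_of_isExtremalRay {R : Set (ℝ × (Fin (2 * g + 2) → ℝ))}
    (hR : IsExtremalRay g R) : R ∈ rayOf '' boundaryClasses g := by
  obtain ⟨v, hv0, hv, rfl, hsplit⟩ := hR
  obtain ⟨x, hx, t, ht, rfl⟩ := exists_mem_eq_pos_smul_of_forall_add_eq hv hv0
    fun u w hu hw huw => (hsplit u w hu hw huw).1
  exact ⟨x, hx, (rayOf_smul_of_pos ht).symm⟩

lemma injOn_rayOf (g : ℕ) : Set.InjOn rayOf (boundaryClasses g) := by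
  intro v hv w hw hvw
  obtain ⟨t, -, hwt⟩ : w ∈ rayOf v := hvw ▸ ⟨1, zero_le_one, (one_smul ℝ w).symm⟩
  obtain ⟨L, hL⟩ := exists_isExposingFunctional hv
  exact (hL.eq_of_eq_smul hv hw hwt).symm

lemma ncard_setOf_card_eq {α : Type*} [Fintype α] (k : ℕ) :
    {s : Finset α | #s = k}.ncard = (Fintype.card α).choose k := by
  simp [Set.ncard_eq_toFinset_card']

lemma ncard_boundaryClasses (g : ℕ) :
    (boundaryClasses g).ncard = (2 * g + 2).choose (g + 1) + (2 * g + 2).choose g := by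
  have hV : boundaryClasses g =
      (fun I => ((g : ℝ), fun i => if i ∈ I then (-1 : ℝ) else 0)) '' {I | #I = g + 1} ∪
      (fun J => (1 - (g : ℝ), fun i => if i ∈ J then (1 : ℝ) else 0)) '' {J | #J = g} := by
    ext v
    simp [boundaryClasses, eq_comm]
  rw [hV, Set.ncard_union_eq ?_ (Set.toFinite _) (Set.toFinite _),
    Set.InjOn.ncard_image fun I _ J _ h => ite_mem_injective (by norm_num) (congrArg Prod.snd h),
    Set.InjOn.ncard_image fun I _ J _ h => ite_mem_injective one_ne_zero (congrArg Prod.snd h),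
    ncard_setOf_card_eq, ncard_setOf_card_eq, Fintype.card_fin]
  rw [Set.disjoint_left]
  rintro _ ⟨I, -, rfl⟩ ⟨J, -, h⟩
  have h2g : ((2 * g : ℕ) : ℝ) = 1 := by push_cast; linarith [congrArg Prod.fst h]
  have : 2 * g = 1 := mod_cast h2g
  omega

end Rays

theorem moriCone_extremal_rays_general (g : ℕ) :
    {R : Set (ℝ × (Fin (2 * g + 2) → ℝ)) | IsExtremalRay g R} =
        rayOf '' boundaryClasses g ∧
      Set.InjOn (rayOf (g := g)) (boundaryClasses g) ∧
      Set.ncard {R : Set (ℝ × (Fin (2 * g + 2) → ℝ)) | IsExtremalRay g R} =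
        Nat.choose (2 * g + 3) (g + 1) := by
  have hrays : {R | IsExtremalRay g R} = rayOf '' boundaryClasses g := by
    ext R
    refine ⟨mem_image_rayOf_of_isExtremalRay, ?_⟩
    rintro ⟨v, hv, rfl⟩
    exact isExtremalRay_rayOf hv
  refine ⟨hrays, injOn_rayOf g, ?_⟩
  rw [hrays, (injOn_rayOf g).ncard_image, ncard_boundaryClasses,
    Nat.choose_succ_succ' (2 * g + 2), add_comm]

/-- **The Mori cone of `Σ_{2g}` has exactly `binom(2g+3, g+1)` extremal
rays**, namely the rays `ℝ_{≥0}·v` for `v ∈ V`, and these rays are pairwise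
distinct. -/
theorem moriCone_extremal_rays (g : ℕ) (hg : 1 ≤ g) :
    {R : Set (ℝ × (Fin (2 * g + 2) → ℝ)) | IsExtremalRay g R} =
        rayOf '' boundaryClasses g ∧
      Set.InjOn (rayOf (g := g)) (boundaryClasses g) ∧
      Set.ncard {R : Set (ℝ × (Fin (2 * g + 2) → ℝ)) | IsExtremalRay g R} =
        Nat.choose (2 * g + 3) (g + 1) :=
  moriCone_extremal_rays_general g
end

section
/- Let g ≥ 2. Let R be the set of g-element subsets of {1, …, 2g} and S the set of (g−2)-element subsets of {1, …, 2g}. Let W ⊆ (R → ℚ) be the ℚ-subspace of families (a_I)_{I ∈ R} satisfying, for every J ∈ S, the linear condition ∑_{I ∈ R, J ⊆ I} a_I = 0. Then the dimension of W equals binom(2g, g) − binom(2g, g−2). (By Kumar's description, W is the space of sections H⁰(ℙ^{2g−1}, L_{2g−1}) of the linear system of degree-g hypersurfaces in ℙ^{2g−1} with multiplicity g−1 at 2g+1 general points, written as ∑_{I∈R} a_I x_I with x_I the square-free monomial ∏_{i∈I} x_i; so this computes h⁰(ℙ^{2g−1}, L_{2g−1}), the dimension of the ambient projective space of the GIT quotient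 Σ_{2g−1}.) -/
/-!
`W` is the kernel of the inclusion map `ℚ^R → ℚ^S`, `a ↦ (∑_{I ⊇ J} a_I)_J`, so it suffices that
this map is onto, i.e. that its transpose `b ↦ (∑_{J ⊆ I} b_J)_I` is injective. Up to the factor
`2!`, this transpose is the square of the up operator `(Uf)(B) = ∑_{b ∈ B} f(B \ {b})` on functions
on the subsets of an `n`-set. With the down operator `D` one has `DU - UD = n - 2|A|`, hence
`‖Uf‖² = ‖Df‖² + ∑_A (n - 2|A|) f(A)²`, so `U` is injective on functions supported strictly below
the middle rank `n / 2`; the levels `g - 2` and `g - 1` lie below `g = n / 2`.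
-/

open Finset Matrix

namespace SubsetLattice

variable {α K : Type*} [DecidableEq α]

section CommRing

variable [CommRing K]

def up (f : Finset α → K) (B : Finset α) : K := ∑ b ∈ B, f (B.erase b)

theorem support_up_subset {f : Finset α → K} {i : ℕ}
    (hf : Function.support f ⊆ {A | #A = i}) :
    Function.support (up f) ⊆ {B | #B = i + 1} := by
  intro B hB
  obtain ⟨b, hb, hfb⟩ := exists_ne_zero_of_sum_ne_zero hB
  have := hf hfb
  simp only [Set.mem_ofPred_eq, card_erase_of_mem hb] at this ⊢
  have := card_pos.2 ⟨b, hb⟩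
  omega

theorem support_up_iterate_subset {f : Finset α → K} {i : ℕ}
    (hf : Function.support f ⊆ {A | #A = i}) (m : ℕ) :
    Function.support (up^[m] f) ⊆ {B | #B = i + m} := by
  induction m with
  | zero => exact hf
  | succ m ih =>
    rw [Function.iterate_succ_apply']
    exact support_up_subset ih

theorem sum_sum_powersetCard_erase {M : Type*} [AddCommMonoid M] (A : Finset α) (k : ℕ)
    (f : Finset α → M) :
    ∑ b ∈ A, ∑ J ∈ (A.erase b).powersetCard k, f J = ∑ J ∈ A.powersetCard k, #(A \ J) • f J := by
  have hfilter : ∀ b, (A.erase b).powersetCard k = (A.powersetCard k).filter (b ∉ ·) := by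
    intro b
    ext J
    simp only [mem_powersetCard, mem_filter, subset_erase]
    tauto
  simp only [hfilter, sum_filter]
  rw [sum_comm]
  refine sum_congr rfl fun J _ => ?_
  rw [← sum_filter, sum_const, ← sdiff_eq_filter]

theorem up_iterate_apply (f : Finset α → K) {m : ℕ} {B : Finset α} (hm : m ≤ #B) :
    up^[m] f B = m.factorial * ∑ J ∈ B.powersetCard (#B - m), f J := by
  induction m generalizing B with
  | zero => simp [powersetCard_self]
  | succ m ih =>
    have herase : ∀ b ∈ B, up^[m] f (B.erase b)
        = m.factorial * ∑ J ∈ (B.erase b).powersetCard (#B - (m + 1)), f J := by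
      intro b hb
      rw [ih (by rw [card_erase_of_mem hb]; omega), card_erase_of_mem hb, Nat.sub_right_comm,
        Nat.sub_sub]
    have hcard : ∀ J ∈ B.powersetCard (#B - (m + 1)), #(B \ J) • f J = (m + 1 : K) * f J := by
      intro J hJ
      obtain ⟨hJB, hJ⟩ := mem_powersetCard.1 hJ
      rw [card_sdiff_of_subset hJB, hJ, Nat.sub_sub_self hm, nsmul_eq_mul]
      push_cast
      ring
    rw [Function.iterate_succ_apply', up, sum_congr rfl herase, ← mul_sum,
      sum_sum_powersetCard_erase, sum_congr rfl hcard, ← mul_sum, Nat.factorial_succ]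
    push_cast
    ring

variable [Fintype α]

def down (f : Finset α → K) (A : Finset α) : K := ∑ a ∈ Aᶜ, f (insert a A)

theorem sum_up_mul_eq_sum_mul_down (f h : Finset α → K) :
    ∑ B, up f B * h B = ∑ A, f A * down h A := by
  simp only [up, down, sum_mul, mul_sum]
  rw [sum_sigma', sum_sigma']
  refine sum_nbij' (fun x => ⟨x.1.erase x.2, x.2⟩) (fun x => ⟨insert x.2 x.1, x.2⟩)
    ?_ ?_ ?_ ?_ ?_ <;>
  · rintro ⟨B, b⟩ hb
    simp_all [insert_erase]

theorem down_up_apply (f : Finset α → K) (A : Finset α) :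
    down (up f) A = up (down f) A + ((Fintype.card α : K) - 2 * #A) * f A := by
  have hdu : down (up f) A = #Aᶜ * f A + ∑ a ∈ Aᶜ, ∑ b ∈ A, f (insert a (A.erase b)) := by
    have hinsert : ∀ a ∈ Aᶜ, up f (insert a A) = f A + ∑ b ∈ A, f (insert a (A.erase b)) := by
      intro a ha
      have ha : a ∉ A := mem_compl.1 ha
      rw [up, sum_insert ha, erase_insert ha]
      congr 1
      refine sum_congr rfl fun b hb => ?_
      rw [erase_insert_of_ne (by rintro rfl; exact ha hb)]
    rw [down, sum_congr rfl hinsert, sum_add_distrib, sum_const, nsmul_eq_mul]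
  have hud : up (down f) A = #A * f A + ∑ b ∈ A, ∑ a ∈ Aᶜ, f (insert a (A.erase b)) := by
    have herase : ∀ b ∈ A, down f (A.erase b) = f A + ∑ a ∈ Aᶜ, f (insert a (A.erase b)) := by
      intro b hb
      rw [down, compl_erase, sum_insert (by simp [hb]), insert_erase hb]
    rw [up, sum_congr rfl herase, sum_add_distrib, sum_const, nsmul_eq_mul]
  rw [hdu, hud, sum_comm, card_compl, Nat.cast_sub (card_le_univ A)]
  ring

end CommRing

section OrderedField

variable [Fintype α] [Field K] [LinearOrder K] [IsStrictOrderedRing K]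

-- `‖Uf‖² = ‖Df‖² + ∑ (|α| - 2|A|) f(A)²`, and the weights are positive on the support of `f`.
theorem eq_zero_of_up_eq_zero {f : Finset α → K}
    (hf : Function.support f ⊆ {A | 2 * #A < Fintype.card α}) (hup : up f = 0) : f = 0 := by
  have hweight : ∀ A, 0 ≤ ((Fintype.card α : K) - 2 * #A) * (f A * f A) := by
    intro A
    by_cases hA : f A = 0
    · simp [hA]
    · have : (2 * #A : K) < Fintype.card α := by exact_mod_cast hf hA
      exact mul_nonneg (by linarith) (mul_self_nonneg _)
  have hsum : ∑ A, down f A * down f A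
      + ∑ A, ((Fintype.card α : K) - 2 * #A) * (f A * f A) = 0 := by
    rw [← sum_up_mul_eq_sum_mul_down, ← sum_add_distrib]
    calc ∑ A, (up (down f) A * f A + ((Fintype.card α : K) - 2 * #A) * (f A * f A))
        = ∑ A, down (up f) A * f A := sum_congr rfl fun A _ => by rw [down_up_apply]; ring
      _ = 0 := by simp [hup, down]
  have hzero := (sum_eq_zero_iff_of_nonneg fun A _ => hweight A).1 <| le_antisymm
    (by linarith [sum_nonneg fun A (_ : A ∈ univ) => mul_self_nonneg (down f A)])
    (sum_nonneg fun A _ => hweight A)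
  funext A
  by_contra hA
  have : (2 * #A : K) < Fintype.card α := by exact_mod_cast hf hA
  exact (mul_pos (by linarith) (mul_self_pos.2 hA)).ne' (hzero A (mem_univ A))

theorem eq_zero_of_forall_sum_powersetCard_eq_zero {f : Finset α → K} {j k : ℕ}
    (hjk : j ≤ k) (hk : 2 * k ≤ Fintype.card α + 1)
    (hf : Function.support f ⊆ {A | #A = j})
    (hsum : ∀ B : Finset α, #B = k → ∑ J ∈ B.powersetCard j, f J = 0) : f = 0 := by
  have htop : up^[k - j] f = 0 := by
    funext B
    by_cases hB : #B = k
    · rw [up_iterate_apply f (by omega), hB, Nat.sub_sub_self hjk, hsum B hB, mul_zero,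
        Pi.zero_apply]
    · by_contra hne
      have := support_up_iterate_subset hf (k - j) hne
      simp only [Set.mem_ofPred_eq] at this
      omega
  suffices ∀ i ≤ k - j, up^[i] f = 0 → f = 0 from this _ le_rfl htop
  intro i
  induction i with
  | zero => exact fun _ => id
  | succ i ih =>
    intro hi hup
    rw [Function.iterate_succ'] at hup
    refine ih (by omega) (eq_zero_of_up_eq_zero ?_ hup)
    refine (support_up_iterate_subset hf i).trans fun A hA => ?_
    simp only [Set.mem_ofPred_eq] at hA ⊢
    omega

end OrderedField

end SubsetLattice

theorem Matrix.finrank_ker_mulVecLin_of_injective_vecMul {K m n : Type*} [Field K] [Fintype m]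
    [Fintype n] {M : Matrix m n K} (hM : Function.Injective M.vecMul) :
    Module.finrank K (LinearMap.ker M.mulVecLin) = Fintype.card n - Fintype.card m := by
  have hrank : M.rank = Fintype.card m := by
    rw [← rank_transpose, rank, mulVecLin_transpose,
      LinearMap.finrank_range_of_inj hM, Module.finrank_fintype_fun_eq_card]
  have := LinearMap.finrank_range_add_finrank_ker M.mulVecLin
  rw [Module.finrank_fintype_fun_eq_card] at this
  change M.rank + _ = _ at this
  omega

variable {α : Type*} [DecidableEq α] (K : Type*) [Field K]

def inclusionMatrix (j k : ℕ) : Matrix {J : Finset α // #J = j} {I : Finset α // #I = k} K :=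
  Matrix.of fun J I => if (J : Finset α) ⊆ I then 1 else 0

variable [Fintype α]

theorem iInf_ker_sum_proj_eq_ker_inclusionMatrix (j k : ℕ) :
    ⨅ J : {J : Finset α // J.card = j}, LinearMap.ker
      (∑ I ∈ univ.filter (fun I : {I : Finset α // I.card = k} => J.1 ⊆ I.1),
        (LinearMap.proj I : ({I : Finset α // I.card = k} → K) →ₗ[K] K))
    = LinearMap.ker (inclusionMatrix (α := α) K j k).mulVecLin := by
  ext a
  simp only [Submodule.mem_iInf, LinearMap.mem_ker, LinearMap.sum_apply, LinearMap.proj_apply,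
    mulVecLin_apply, funext_iff, Pi.zero_apply]
  simp [inclusionMatrix, mulVec, dotProduct, sum_filter]

theorem vecMul_inclusionMatrix_apply {j k : ℕ} (b : {J : Finset α // #J = j} → K)
    (I : {I : Finset α // #I = k}) :
    (b ᵥ* inclusionMatrix K j k) I
      = ∑ J ∈ (I : Finset α).powersetCard j, if h : #J = j then b ⟨J, h⟩ else 0 := by
  have hlevel : univ.filter (fun J : {J : Finset α // #J = j} => J.1 ⊆ I)
      = ((I : Finset α).powersetCard j).subtype (#· = j) := by
    ext J
    simp [J.2]
  rw [← sum_filter_of_ne (p := (#· = j)) fun J hJ _ => (mem_powersetCard.1 hJ).2,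
    ← sum_subtype_eq_sum_filter, ← hlevel, sum_filter]
  simp only [vecMul, dotProduct, inclusionMatrix, of_apply, mul_ite, mul_one, mul_zero]
  exact sum_congr rfl fun J _ => by simp [J.2]

theorem injective_vecMul_inclusionMatrix [LinearOrder K] [IsStrictOrderedRing K] {j k : ℕ}
    (hjk : j ≤ k) (hk : 2 * k ≤ Fintype.card α + 1) :
    Function.Injective (inclusionMatrix (α := α) K j k).vecMul := by
  rw [← coe_vecMulLinear, ← LinearMap.ker_eq_bot, LinearMap.ker_eq_bot']
  intro b hb
  set F : Finset α → K := fun J => if h : #J = j then b ⟨J, h⟩ else 0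
  have hF : F = 0 := SubsetLattice.eq_zero_of_forall_sum_powersetCard_eq_zero hjk hk
    (fun J hJ => by_contra fun h => hJ (dif_neg h))
    (fun B hB => by rw [← vecMul_inclusionMatrix_apply K b ⟨B, hB⟩]; exact congrFun hb _)
  funext J
  simpa [F, J.2] using congrFun hF J.1

theorem kumar_sections_dim_general (g : ℕ) :
    Module.finrank ℚ
      ↥(⨅ J : {J : Finset (Fin (2 * g)) // J.card = g - 2},
          LinearMap.ker
            (∑ I ∈ Finset.univ.filter
                (fun I : {I : Finset (Fin (2 * g)) // I.card = g} =>
                  J.1 ⊆ I.1),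
              (LinearMap.proj I :
                ({I : Finset (Fin (2 * g)) // I.card = g} → ℚ) →ₗ[ℚ] ℚ))) =
      Nat.choose (2 * g) g - Nat.choose (2 * g) (g - 2) := by
  rw [iInf_ker_sum_proj_eq_ker_inclusionMatrix,
    Matrix.finrank_ker_mulVecLin_of_injective_vecMul
      (injective_vecMul_inclusionMatrix ℚ (Nat.sub_le g 2) (by simp)),
    Fintype.card_finset_len, Fintype.card_finset_len, Fintype.card_fin]

/-- **Dimension of Kumar's space of sections.**
Let `R` be the set of `g`-element subsets of `{1, …, 2g}` and `S` the set of
`(g-2)`-element subsets.  Let `W ⊆ (R → ℚ)` be the subspace of families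
`(a_I)` satisfying `∑_{I ⊇ J} a_I = 0` for every `J ∈ S`.  Then
`dim W = binom(2g, g) - binom(2g, g-2)`.  (By Kumar's description, `W` is
`H⁰(ℙ^{2g-1}, L_{2g-1})`, the space of sections of the linear system of
degree-`g` hypersurfaces with multiplicity `g-1` at `2g+1` general points.) -/
theorem kumar_sections_dim (g : ℕ) (hg : 2 ≤ g) :
    Module.finrank ℚ
      ↥(⨅ J : {J : Finset (Fin (2 * g)) // J.card = g - 2},
          LinearMap.ker
            (∑ I ∈ Finset.univ.filter
                (fun I : {I : Finset (Fin (2 * g)) // I.card = g} =>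
                  J.1 ⊆ I.1),
              (LinearMap.proj I :
                ({I : Finset (Fin (2 * g)) // I.card = g} → ℚ) →ₗ[ℚ] ℚ))) =
      Nat.choose (2 * g) g - Nat.choose (2 * g) (g - 2) :=
  kumar_sections_dim_general g
end

section
/- For every integer g ≥ 2 the following identity of integers holds: binom(3g−1, 2g−1) + ∑_{r=0}^{g−2} (−1)^{r+1} · binom(2g+1, r+1) · binom(3g−2r−3, 2g−1) = binom(2g, g) − binom(2g, g−2). (The left-hand side is the value h_{Σ_{2g−1}}(1) of the Hilbert polynomial of the GIT quotient Σ_{2g−1} ⊂ ℙᴺ in its natural embedding, i.e. h⁰(ℙ^{2g−1}, L_{2g−1}) as computed from the linear virtual dimension; the right-hand side is Kumar's count of the same dimension.) -/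
/-!
Comparing coefficients of `X ^ m` in `(1 - X²)ⁿ · (1 - X)⁻ⁿ = (1 + X)ⁿ` gives
`∑ₛ (-1)ˢ C(n, s) C(n + m - 2s - 1, n - 1) = C(n, m)`. Pascal's rule splits `C(2g + 1, r + 1)`
into `C(2g, r + 1) + C(2g, r)`, and the two resulting sums are this identity for `n = 2g`
at `m = g` and at `m = g - 2`.
-/

open Finset

namespace PowerSeries

variable {R : Type*} [CommRing R]

theorem coeff_one_add_X_pow (n m : ℕ) : coeff m ((1 + X : R⟦X⟧) ^ n) = n.choose m := by
  rw [← Polynomial.coe_X, ← Polynomial.coe_one, ← Polynomial.coe_add, ← Polynomial.coe_pow,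
    Polynomial.coeff_coe, Polynomial.coeff_one_add_X_pow]

theorem one_sub_X_sq_pow_mul_invOneSubPow (n : ℕ) :
    (1 - X ^ 2 : R⟦X⟧) ^ n * (invOneSubPow R n).val = (1 + X) ^ n := by
  have h := one_sub_pow_add_mul_invOneSubPow_val_eq_one_sub_pow R 0 n
  rw [zero_add, pow_zero] at h
  rw [show (1 - X ^ 2 : R⟦X⟧) = (1 + X) * (1 - X) by ring, mul_pow, mul_assoc, h, mul_one]

/-- For `k > m` the truncated subtraction gives `n + m - k - 1 < n - 1` (here `2 ≤ n` is
needed), so the formula also covers the vanishing coefficients. -/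
theorem coeff_X_pow_mul_invOneSubPow {n : ℕ} (hn : 2 ≤ n) (k m : ℕ) :
    coeff m (X ^ k * (invOneSubPow R n).val : R⟦X⟧) = (n + m - k - 1).choose (n - 1) := by
  rw [coeff_X_pow_mul', invOneSubPow_val_eq_mk_sub_one_add_choose_of_pos R n (by omega)]
  split_ifs with hk
  · rw [coeff_mk, show n - 1 + (m - k) = n + m - k - 1 by omega]
  · rw [Nat.choose_eq_zero_of_lt (by omega), Nat.cast_zero]

end PowerSeries

open PowerSeries in
theorem sum_range_neg_one_pow_mul_choose_mul_choose {n : ℕ} (hn : 2 ≤ n) (m : ℕ) :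
    ∑ s ∈ range (m + 1), (-1 : ℤ) ^ s * n.choose s * (n + m - 2 * s - 1).choose (n - 1) =
      n.choose m := by
  have hexpand : (1 - X ^ 2 : ℤ⟦X⟧) ^ n =
      ∑ s ∈ range (n + 1), C ((-1 : ℤ) ^ s * n.choose s) * X ^ (2 * s) := by
    rw [sub_eq_add_neg, add_comm, add_pow]
    refine sum_congr rfl fun s _ ↦ ?_
    rw [one_pow, mul_one, neg_pow, pow_mul, map_mul, map_pow, map_natCast]
    simp only [map_neg, map_one]
    ring
  have hcoeff := congrArg (coeff m) (one_sub_X_sq_pow_mul_invOneSubPow (R := ℤ) n)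
  rw [hexpand, sum_mul, map_sum, coeff_one_add_X_pow] at hcoeff
  simp only [mul_assoc, coeff_C_mul, coeff_X_pow_mul_invOneSubPow hn] at hcoeff
  have hvanish : ∀ s, n < s ∨ m < 2 * s →
      (-1 : ℤ) ^ s * (n.choose s * (n + m - 2 * s - 1).choose (n - 1) : ℤ) = 0 := by
    rintro s (hs | hs)
    · simp [Nat.choose_eq_zero_of_lt hs]
    · simp [Nat.choose_eq_zero_of_lt (show n + m - 2 * s - 1 < n - 1 by omega)]
  have hextend (k : ℕ) (hk : k ≤ n + m + 1) (hvk : ∀ s, k ≤ s → n < s ∨ m < 2 * s) :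
      ∑ s ∈ range k, (-1 : ℤ) ^ s * (n.choose s * (n + m - 2 * s - 1).choose (n - 1) : ℤ) =
        ∑ s ∈ range (n + m + 1),
          (-1 : ℤ) ^ s * (n.choose s * (n + m - 2 * s - 1).choose (n - 1) : ℤ) := by
    refine sum_subset (range_subset_range.2 hk) fun s _ hs ↦ hvanish s (hvk s ?_)
    simpa using hs
  simp only [mul_assoc]
  rw [← hcoeff, hextend (m + 1) (by omega) (fun s _ ↦ by omega),
    hextend (n + 1) (by omega) (fun s _ ↦ by omega)]

theorem sum_range_neg_one_pow_succ_mul_choose_succ_succ (n k : ℕ) (f : ℕ → ℤ) :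
    ∑ r ∈ range k, (-1 : ℤ) ^ (r + 1) * (n + 1).choose (r + 1) * f r =
      ∑ r ∈ range k, (-1 : ℤ) ^ (r + 1) * n.choose (r + 1) * f r -
        ∑ r ∈ range k, (-1 : ℤ) ^ r * n.choose r * f r := by
  rw [← sum_sub_distrib]
  refine sum_congr rfl fun r _ ↦ ?_
  rw [Nat.choose_succ_succ']
  push_cast
  ring

/-- **Two computations of `h⁰(ℙ^{2g-1}, L_{2g-1})` agree.**
For every integer `g ≥ 2`,
`binom(3g-1, 2g-1) + ∑_{r=0}^{g-2} (-1)^{r+1}·binom(2g+1, r+1)·binom(3g-2r-3, 2g-1)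
  = binom(2g, g) - binom(2g, g-2)`
as integers.  The left-hand side is the value `h_{Σ_{2g-1}}(1)` of the
Hilbert polynomial of the GIT quotient `Σ_{2g-1} ⊂ ℙᴺ`; the right-hand side
is Kumar's count of the same dimension. -/
theorem hilbert_value_eq_kumar_count (g : ℕ) (hg : 2 ≤ g) :
    (Nat.choose (3 * g - 1) (2 * g - 1) : ℤ) +
        ∑ r ∈ Finset.range (g - 1),
          (-1 : ℤ) ^ (r + 1) * (Nat.choose (2 * g + 1) (r + 1) : ℤ) *
            (Nat.choose (3 * g - 2 * r - 3) (2 * g - 1) : ℤ) =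
      (Nat.choose (2 * g) g : ℤ) - (Nat.choose (2 * g) (g - 2) : ℤ) := by
  have hmid : ((3 * g - 1).choose (2 * g - 1) : ℤ) + ∑ r ∈ range (g - 1),
      (-1 : ℤ) ^ (r + 1) * (2 * g).choose (r + 1) * (3 * g - 2 * r - 3).choose (2 * g - 1) =
        (2 * g).choose g := by
    have h := sum_range_neg_one_pow_mul_choose_mul_choose (n := 2 * g) (by omega) g
    rw [show g + 1 = g - 1 + 1 + 1 by omega, sum_range_succ, sum_range_succ',
      Nat.choose_eq_zero_of_lt (show 2 * g + g - 2 * (g - 1 + 1) - 1 < 2 * g - 1 by omega),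
      show 2 * g + g - 2 * 0 - 1 = 3 * g - 1 by omega] at h
    simp only [show ∀ r, 2 * g + g - 2 * (r + 1) - 1 = 3 * g - 2 * r - 3 by omega, pow_zero, Nat.choose_zero_right,
      Nat.cast_one, one_mul, Nat.cast_zero, mul_zero, add_zero] at h
    linear_combination h
  have hlow : ∑ r ∈ range (g - 1),
      (-1 : ℤ) ^ r * (2 * g).choose r * (3 * g - 2 * r - 3).choose (2 * g - 1) =
        (2 * g).choose (g - 2) := by
    simpa only [show g - 2 + 1 = g - 1 by omega,
      show ∀ r, 2 * g + (g - 2) - 2 * r - 1 = 3 * g - 2 * r - 3 by omega] using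
      sum_range_neg_one_pow_mul_choose_mul_choose (n := 2 * g) (by omega) (g - 2)
  rw [sum_range_neg_one_pow_succ_mul_choose_succ_succ]
  linear_combination hmid - hlow
end
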